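/- A finite set Q ⊆ ℝ² is arboreally satisfied if and only if every pair of points of Q is M-connected in Q. -/

import Mathlib

abbrev Pt := ℝ × ℝ
abbrev Dem := Pt × Pt

noncomputable section

/-- ℓ1 distance in the plane. -/
def dist1 (p q : Pt) : ℝ := |p.1 - q.1| + |p.2 - q.2|

/-- Two points are aligned if they are vertically or horizontally aligned. -/
def Aligned (p q : Pt) : Prop := p.1 = q.1 ∨ p.2 = q.2

/-- `p` and `q` are Manhattan-connected in the point set `S`: the Manhattan graph on `S`
contains a rectilinear path from `p` to `q` of total length `‖p - q‖₁`. -/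
def MConnected (S : Set Pt) (p q : Pt) : Prop :=
  ∃ (k : ℕ) (f : Fin (k + 1) → Pt),
    f 0 = p ∧ f (Fin.last k) = q ∧ (∀ i, f i ∈ S) ∧
    (∀ i : Fin k, Aligned (f i.castSucc) (f i.succ)) ∧
    (∑ i : Fin k, dist1 (f i.castSucc) (f i.succ)) = dist1 p q

/-- `Q` is a feasible solution for the instance `(P, D)`. -/
def MFeasible (P : Set Pt) (D : Set Dem) (Q : Set Pt) : Prop :=
  ∀ d ∈ D, MConnected (P ∪ Q) d.1 d.2

/-- Minimum cardinality of a feasible solution. -/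
def optN (P : Set Pt) (D : Set Dem) : ℕ :=
  sInf {n | ∃ Q : Finset Pt, MFeasible P D ↑Q ∧ Q.card = n}

/-- The closed axis-aligned rectangle spanned by `p` and `q`. -/
def Rect (p q : Pt) : Set Pt :=
  {z | min p.1 q.1 ≤ z.1 ∧ z.1 ≤ max p.1 q.1 ∧ min p.2 q.2 ≤ z.2 ∧ z.2 ≤ max p.2 q.2}

/-- The interior of the axis-aligned rectangle spanned by `p` and `q`. -/
def RectInt (p q : Pt) : Set Pt :=
  {z | min p.1 q.1 < z.1 ∧ z.1 < max p.1 q.1 ∧ min p.2 q.2 < z.2 ∧ z.2 < max p.2 q.2}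

/-- The four corners of the rectangle spanned by `p` and `q`. -/
def Corners (p q : Pt) : Set Pt := {(p.1, p.2), (p.1, q.2), (q.1, p.2), (q.1, q.2)}

/-- Two demand rectangles are non-conflicting if neither contains a corner of the other
in its interior. -/
def NonConflicting (d e : Dem) : Prop :=
  (∀ c ∈ Corners e.1 e.2, c ∉ RectInt d.1 d.2) ∧
  (∀ c ∈ Corners d.1 d.2, c ∉ RectInt e.1 e.2)

/-- `IRN D` : maximum cardinality of an independent (pairwise non-conflicting) subset of `D`. -/
def IRN (D : Set Dem) : ℕ :=
  sSup {n | ∃ D' : Finset Dem, ↑D' ⊆ D ∧ D'.card = n ∧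
    ∀ d ∈ D', ∀ e ∈ D', d ≠ e → NonConflicting d e}

/-- The vertical segment at `x = a` spanning the `y`-range between `y1` and `y2`. -/
def VSeg (a y1 y2 : ℝ) : Set Pt :=
  {z | z.1 = a ∧ min y1 y2 ≤ z.2 ∧ z.2 ≤ max y1 y2}

/-- A finite set of demands is vertically separable: its demand rectangles can be ordered
`R₁, …, R_k` with vertical segments `ℓ₁, …, ℓ_k`, where `ℓᵢ` connects the interior of the top
boundary of `Rᵢ` with the interior of its bottom boundary and avoids `R_j` for all `j > i`. -/
def VertSeparable (D' : Finset Dem) : Prop :=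
  ∃ (e : Fin D'.card → Dem) (a : Fin D'.card → ℝ),
    Function.Injective e ∧ (∀ i, e i ∈ D') ∧
    (∀ i, min (e i).1.1 (e i).2.1 < a i ∧ a i < max (e i).1.1 (e i).2.1) ∧
    ∀ i j : Fin D'.card, i < j →
      VSeg (a i) (e i).1.2 (e i).2.2 ∩ Rect (e j).1 (e j).2 = ∅

/-- `VSN D` : maximum cardinality of a vertically separable subset of `D`. -/
def VSN (D : Set Dem) : ℕ :=
  sSup {n | ∃ D' : Finset Dem, ↑D' ⊆ D ∧ D'.card = n ∧ VertSeparable D'}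

/-- `λ(p,q)` : the left vertical side of the demand rectangle `R(p,q)`. -/
def LSeg (d : Dem) : Set Pt := VSeg d.1.1 d.1.2 d.2.2

/-- `ρ(p,q)` : the right vertical side of the demand rectangle `R(p,q)`. -/
def RSeg (d : Dem) : Set Pt := VSeg d.2.1 d.1.2 d.2.2

/-- A left boundary independent set: the left sides are pairwise non-overlapping. -/
def LeftBIS (D' : Finset Dem) : Prop :=
  ∀ d ∈ D', ∀ e ∈ D', d ≠ e → Set.Subsingleton (LSeg d ∩ LSeg e)

/-- A right boundary independent set: the right sides are pairwise non-overlapping. -/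
def RightBIS (D' : Finset Dem) : Prop :=
  ∀ d ∈ D', ∀ e ∈ D', d ≠ e → Set.Subsingleton (RSeg d ∩ RSeg e)

/-- `ISN D` : maximum cardinality of a (left or right) boundary independent subset of `D`. -/
def ISN (D : Set Dem) : ℕ :=
  sSup {n | ∃ D' : Finset Dem, ↑D' ⊆ D ∧ D'.card = n ∧ (LeftBIS D' ∨ RightBIS D')}

/-- `(P, D)` is a MinGMConn instance: demands are between input points, ordered by
`x`-coordinate. -/
def IsInstance (P : Finset Pt) (D : Finset Dem) : Prop :=
  ∀ d ∈ D, d.1 ∈ P ∧ d.2 ∈ P ∧ d.1.1 < d.2.1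

/-- The points of `P` have pairwise distinct `x`-coordinates. -/
def DistinctX (P : Finset Pt) : Prop := ∀ p ∈ P, ∀ q ∈ P, p ≠ q → p.1 ≠ q.1

/-- The points of `P` have pairwise distinct `y`-coordinates. -/
def DistinctY (P : Finset Pt) : Prop := ∀ p ∈ P, ∀ q ∈ P, p ≠ q → p.2 ≠ q.2

end

noncomputable section

/-- The `i`-th open vertical strip determined by boundaries `b` (with `b 0 = ⊥`, `b s = ⊤`). -/
def strip (s : ℕ) (b : Fin (s + 1) → EReal) (i : Fin s) : Set Pt :=
  {z | b i.castSucc < (z.1 : EReal) ∧ (z.1 : EReal) < b i.succ}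

/-- `b` describes a strip subdivision into `s` vertical strips via `s - 1` vertical lines,
none of which passes through a point of `P`. -/
def IsStripSubdivision (s : ℕ) (b : Fin (s + 1) → EReal) (P : Finset Pt) : Prop :=
  1 ≤ s ∧ StrictMono b ∧ b 0 = ⊥ ∧ b (Fin.last s) = ⊤ ∧
    ∀ p ∈ P, ∀ i : Fin (s + 1), (p.1 : EReal) ≠ b i

/-- The projections `π_𝒮(P)` of the points of `P` onto the adjacent strip boundaries. -/
def stripProj (s : ℕ) (b : Fin (s + 1) → EReal) (P : Set Pt) : Set Pt :=
  {z | ∃ p ∈ P, ∃ i : Fin s, p ∈ strip s b i ∧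
    ((i.val ≠ 0 ∧ z = ((b i.castSucc).toReal, p.2)) ∨
     (i.val + 1 ≠ s ∧ z = ((b i.succ).toReal, p.2)))}

/-- The demand set `π_𝒮(D)` of the inter-strip instance: demands between points in
different, non-adjacent strips, projected to the adjacent strip boundaries. -/
def stripDem (s : ℕ) (b : Fin (s + 1) → EReal) (D : Set Dem) : Set Dem :=
  {d | ∃ pq ∈ D, ∃ i j : Fin s,
    pq.1 ∈ strip s b i ∧ pq.2 ∈ strip s b j ∧ i.val + 2 ≤ j.val ∧
    d = (((b i.succ).toReal, pq.1.2), ((b j.castSucc).toReal, pq.2.2))}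

/-- `p 0, …, p n` form a triangular instance of size `n` :
`x`-coordinates strictly increasing, while `p 1, …, p n` form a descending diagonal
lying to the top-right of `p 0`. -/
def IsTriangular (n : ℕ) (p : Fin (n + 1) → Pt) : Prop :=
  (∀ i j : Fin (n + 1), i < j → (p i).1 < (p j).1) ∧
  (∀ i j : Fin (n + 1), i ≠ 0 → i < j → (p j).2 < (p i).2) ∧
  (∀ i : Fin (n + 1), i ≠ 0 → (p 0).2 < (p i).2)

/-- The point set of a triangular instance. -/
def triP (n : ℕ) (p : Fin (n + 1) → Pt) : Finset Pt := Finset.image p Finset.univ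

/-- The demand set of a triangular instance: `(p 0, p i)` for `1 ≤ i ≤ n`. -/
def triD (n : ℕ) (p : Fin (n + 1) → Pt) : Finset Dem :=
  Finset.image (fun i => (p 0, p i)) (Finset.univ.filter fun i : Fin (n + 1) => i ≠ 0)

/-- The triangular grid of a triangular instance. -/
def triGrid (n : ℕ) (p : Fin (n + 1) → Pt) : Set Pt :=
  {z | (∃ i, z.1 = (p i).1) ∧ (∃ j, z.2 = (p j).2) ∧
    ∃ i : Fin (n + 1), i ≠ 0 ∧ z ∈ Rect (p 0) (p i)}

/-- `Q` is arboreally satisfied: for every non-aligned pair of its points, the rectangle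
they span contains a third point of `Q`. -/
def ArboreallySatisfied (Q : Finset Pt) : Prop :=
  ∀ p ∈ Q, ∀ q ∈ Q, ¬ Aligned p q → ∃ r ∈ Q, r ≠ p ∧ r ≠ q ∧ r ∈ Rect p q

/-- The Manhattan graph on a finite point set `S`. -/
def manhattanGraph (S : Finset Pt) : SimpleGraph {x : Pt // x ∈ S} where
  Adj a b := a ≠ b ∧ Aligned a.1 b.1
  symm := ⟨fun _ _ h => ⟨h.1.symm, h.2.imp Eq.symm Eq.symm⟩⟩
  loopless := ⟨fun _ h => h.1 rfl⟩

/-- The demand graph of an instance `(P, D)`. -/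
def demandGraph (P : Finset Pt) (D : Finset Dem) : SimpleGraph {x : Pt // x ∈ P} where
  Adj a b := a ≠ b ∧ (((a : Pt), (b : Pt)) ∈ D ∨ ((b : Pt), (a : Pt)) ∈ D)
  symm := ⟨fun _ _ h => ⟨h.1.symm, h.2.symm⟩⟩
  loopless := ⟨fun _ h => h.1 rfl⟩

/-- `C` is an axis-aligned rectangle: a product of two intervals. -/
def IsAxisRect (C : Set Pt) : Prop :=
  ∃ I J : Set ℝ, I.OrdConnected ∧ J.OrdConnected ∧ C = I ×ˢ J

end

/-!
Both conditions amount to: for distinct `p, q ∈ Q` some `r ∈ Q ∩ □_{p,q}`, `r ≠ p`, is aligned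
with `p`. In an arboreally satisfied set the point of `Q ∩ □_{p,q} \ {p}` nearest to `p` is such
an `r` (otherwise its rectangle with `p` would contain a nearer one), and repeating the step from
`r` towards `q` builds a monotone path, since `□_{r,q} ⊆ □_{p,q}` misses `p`. Conversely, the
first vertex different from `p` on a monotone path from `p` to `q` is such an `r`, and it differs
from `q` when `p` and `q` are not aligned.
-/

open Set

theorem abs_sub_add_abs_sub_eq_iff_mem_uIcc (a b c : ℝ) :
    |a - b| + |b - c| = |a - c| ↔ b ∈ uIcc a c := by
  rw [← Real.dist_eq, ← Real.dist_eq, ← Real.dist_eq, dist_add_dist_eq_iff,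
    ← mem_segment_iff_wbtw, segment_eq_uIcc]

theorem dist1_comm (p q : Pt) : dist1 p q = dist1 q p := by
  simp only [dist1, abs_sub_comm]

theorem dist1_triangle (p r q : Pt) : dist1 p q ≤ dist1 p r + dist1 r q := by
  unfold dist1
  linarith [abs_sub_le p.1 r.1 q.1, abs_sub_le p.2 r.2 q.2]

theorem dist1_self (p : Pt) : dist1 p p = 0 := by
  simp [dist1]

theorem dist1_pos {p q : Pt} (h : p ≠ q) : 0 < dist1 p q := by
  obtain h1 | h2 : p.1 ≠ q.1 ∨ p.2 ≠ q.2 := by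
    contrapose! h
    exact Prod.ext h.1 h.2
  · exact add_pos_of_pos_of_nonneg (abs_pos.2 (sub_ne_zero.2 h1)) (abs_nonneg _)
  · exact add_pos_of_nonneg_of_pos (abs_nonneg _) (abs_pos.2 (sub_ne_zero.2 h2))

theorem Rect_eq_uIcc_prod (p q : Pt) : Rect p q = uIcc p.1 q.1 ×ˢ uIcc p.2 q.2 := by
  ext z
  exact and_assoc.symm

theorem left_mem_Rect (p q : Pt) : p ∈ Rect p q := by
  simp [Rect_eq_uIcc_prod]

theorem right_mem_Rect (p q : Pt) : q ∈ Rect p q := by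
  simp [Rect_eq_uIcc_prod]

theorem Rect_subset_Rect_left {p q r : Pt} (h : r ∈ Rect p q) : Rect p r ⊆ Rect p q := by
  simp only [Rect_eq_uIcc_prod] at h ⊢
  exact prod_mono (uIcc_subset_uIcc left_mem_uIcc h.1) (uIcc_subset_uIcc left_mem_uIcc h.2)

theorem Rect_subset_Rect_right {p q r : Pt} (h : r ∈ Rect p q) : Rect r q ⊆ Rect p q := by
  simp only [Rect_eq_uIcc_prod] at h ⊢
  exact prod_mono (uIcc_subset_uIcc h.1 right_mem_uIcc) (uIcc_subset_uIcc h.2 right_mem_uIcc)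

theorem mem_Rect_iff_dist1 {p q z : Pt} : z ∈ Rect p q ↔ dist1 p z + dist1 z q = dist1 p q := by
  rw [Rect_eq_uIcc_prod, mem_prod, ← abs_sub_add_abs_sub_eq_iff_mem_uIcc,
    ← abs_sub_add_abs_sub_eq_iff_mem_uIcc]
  unfold dist1
  have := abs_sub_le p.1 z.1 q.1
  have := abs_sub_le p.2 z.2 q.2
  constructor
  · rintro ⟨h1, h2⟩
    linarith
  · intro h
    constructor <;> linarith

theorem dist1_le_sum_dist1 {k : ℕ} (f : Fin (k + 1) → Pt) :
    dist1 (f 0) (f (Fin.last k)) ≤ ∑ i : Fin k, dist1 (f i.castSucc) (f i.succ) := by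
  induction k with
  | zero => simp [dist1_self]
  | succ k ih =>
    have htail := ih (Fin.tail f)
    simp only [Fin.tail, Fin.succ_last] at htail
    rw [Fin.sum_univ_succ]
    calc dist1 (f 0) (f (Fin.last (k + 1)))
        ≤ dist1 (f 0) (f 1) + dist1 (f 1) (f (Fin.last (k + 1))) := dist1_triangle _ _ _
      _ ≤ _ := by simpa using htail

theorem exists_aligned_step_of_path {S : Set Pt} {k : ℕ} (f : Fin (k + 1) → Pt)
    (hS : ∀ i, f i ∈ S) (hal : ∀ i : Fin k, Aligned (f i.castSucc) (f i.succ))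
    (hne : f 0 ≠ f (Fin.last k)) :
    ∃ r ∈ S, r ≠ f 0 ∧ Aligned (f 0) r ∧
      dist1 (f 0) r + dist1 r (f (Fin.last k)) ≤ ∑ i : Fin k, dist1 (f i.castSucc) (f i.succ) := by
  induction k with
  | zero => exact absurd rfl hne
  | succ k ih =>
    rw [Fin.sum_univ_succ]
    by_cases h01 : f 1 = f 0
    · obtain ⟨r, hr, hrp, hpr, hle⟩ := ih (Fin.tail f) (fun i => hS _)
        (fun i => by simpa [Fin.tail, ← Fin.succ_castSucc] using hal i.succ)
        (by simpa [Fin.tail, h01] using hne)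
      simp only [Fin.tail, Fin.succ_zero_eq_one, Fin.succ_last, h01] at hrp hpr hle
      refine ⟨r, hr, hrp, hpr, ?_⟩
      simpa [h01, dist1_self] using hle
    · have htail := dist1_le_sum_dist1 (Fin.tail f)
      simp only [Fin.tail, Fin.succ_last] at htail
      exact ⟨f 1, hS 1, h01, by simpa using hal 0, by simpa using htail⟩

theorem MConnected.refl {S : Set Pt} {p : Pt} (hp : p ∈ S) : MConnected S p p :=
  ⟨0, fun _ => p, rfl, rfl, fun _ => hp, fun i => i.elim0, by simp [dist1_self]⟩

theorem MConnected.cons {S : Set Pt} {p r q : Pt} (hp : p ∈ S) (hpr : Aligned p r)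
    (hr : dist1 p r + dist1 r q = dist1 p q) (h : MConnected S r q) : MConnected S p q := by
  obtain ⟨k, f, rfl, rfl, hS, hal, hsum⟩ := h
  refine ⟨k + 1, Fin.cons p f, rfl, by simp [← Fin.succ_last], Fin.cases hp hS,
    Fin.cases (by simpa using hpr) fun i => by simpa [← Fin.succ_castSucc] using hal i, ?_⟩
  simpa [Fin.sum_univ_succ, ← Fin.succ_castSucc, hsum] using hr

theorem MConnected.exists_aligned_step {S : Set Pt} {p q : Pt} (h : MConnected S p q)
    (hpq : p ≠ q) : ∃ r ∈ S, r ≠ p ∧ Aligned p r ∧ r ∈ Rect p q := by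
  obtain ⟨k, f, rfl, rfl, hS, hal, hsum⟩ := h
  obtain ⟨r, hr, hrp, hpr, hle⟩ := exists_aligned_step_of_path f hS hal hpq
  exact ⟨r, hr, hrp, hpr, mem_Rect_iff_dist1.2 (le_antisymm (hsum ▸ hle) (dist1_triangle _ _ _))⟩

theorem ArboreallySatisfied.exists_aligned_step {Q : Finset Pt} (hQ : ArboreallySatisfied Q)
    {p q : Pt} (hp : p ∈ Q) (hq : q ∈ Q) (hpq : p ≠ q) :
    ∃ r ∈ Q, r ≠ p ∧ Aligned p r ∧ r ∈ Rect p q := by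
  classical
  obtain ⟨r, hr, hmin⟩ := (Q.filter fun r => r ∈ Rect p q ∧ r ≠ p).exists_min_image (dist1 p)
    ⟨q, Finset.mem_filter.2 ⟨hq, right_mem_Rect p q, hpq.symm⟩⟩
  simp only [Finset.mem_filter, and_imp] at hr hmin
  obtain ⟨hrQ, hrR, hrp⟩ := hr
  refine ⟨r, hrQ, hrp, ?_, hrR⟩
  by_contra hal
  obtain ⟨s, hsQ, hsp, hsr, hsR⟩ := hQ p hp r hrQ hal
  have hle := hmin s hsQ (Rect_subset_Rect_left hrR hsR) hsp
  linarith [mem_Rect_iff_dist1.1 hsR, dist1_pos hsr]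

theorem mConnected_of_exists_aligned_step {Q : Finset Pt}
    (hstep : ∀ p ∈ Q, ∀ q ∈ Q, p ≠ q → ∃ r ∈ Q, r ≠ p ∧ Aligned p r ∧ r ∈ Rect p q)
    {p q : Pt} (hp : p ∈ Q) (hq : q ∈ Q) : MConnected Q p q := by
  classical
  induction hn : (Q.filter (· ∈ Rect p q)).card using Nat.strong_induction_on generalizing p with
  | _ n ih =>
  obtain rfl | hpq := eq_or_ne p q
  · exact .refl hp
  obtain ⟨r, hr, hrp, hpr, hrR⟩ := hstep p hp q hq hpq
  refine .cons hp hpr (mem_Rect_iff_dist1.1 hrR) (ih _ ?_ hr rfl)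
  have hp_notMem : p ∉ Rect r q := fun hp' => by
    linarith [mem_Rect_iff_dist1.1 hrR, mem_Rect_iff_dist1.1 hp', dist1_comm p r, dist1_pos hrp]
  rw [← hn]
  refine Finset.card_lt_card ((Finset.ssubset_iff_of_subset ?_).2 ⟨p, ?_, ?_⟩)
  · exact Finset.monotone_filter_right _ fun z _ hz => Rect_subset_Rect_right hrR hz
  · exact Finset.mem_filter.2 ⟨hp, left_mem_Rect p q⟩
  · exact fun h => hp_notMem (Finset.mem_filter.1 h).2

/-- A finite set `Q ⊆ ℝ²` is arboreally satisfied iff every pair of its points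
is M-connected in `Q`. -/
theorem stmt13 (Q : Finset Pt) :
    ArboreallySatisfied Q ↔ ∀ p ∈ Q, ∀ q ∈ Q, MConnected ↑Q p q := by
  constructor
  · intro hQ p hp q hq
    exact mConnected_of_exists_aligned_step (fun p hp q hq => hQ.exists_aligned_step hp hq) hp hq
  · intro h p hp q hq hal
    obtain ⟨r, hr, hrp, hpr, hrR⟩ :=
      (h p hp q hq).exists_aligned_step fun hpq => hal (hpq ▸ .inl rfl)
    exact ⟨r, hr, hrp, fun hrq => hal (hrq ▸ hpr), hrR⟩
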